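/- The map h: ℂ⁴ → ℝ given by h(z₁,z₂,z₃,z₄) = Re(i e^{-z₁j} e^{z₂j} e^{-z₃j} e^{z₄j}) satisfies h(z̄₁,z̄₂,z̄₃,z̄₄) = -h(z₁,z₂,z₃,z₄); in particular complex conjugation in each coordinate preserves h⁻¹(0). -/

import Mathlib

open Quaternion

/-- The quaternion unit `i`. -/
def qi : ℍ[ℝ] := ⟨0, 1, 0, 0⟩

/-- The quaternion unit `j`. -/
def qj : ℍ[ℝ] := ⟨0, 0, 1, 0⟩

/-- The quaternion unit `k`. -/
def qk : ℍ[ℝ] := ⟨0, 0, 0, 1⟩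

/-- For a complex number `z = x + yi`, the quaternionic exponential `e^{zj} = e^{xj + yk}`. -/
noncomputable def expZJ (z : ℂ) : ℍ[ℝ] := NormedSpace.exp (z.re • qj + z.im • qk)

/-- The map `h(z₁,z₂,z₃,z₄) = Re(i e^{-z₁j} e^{z₂j} e^{-z₃j} e^{z₄j})`. -/
noncomputable def hMap (z₁ z₂ z₃ z₄ : ℂ) : ℝ :=
  (qi * expZJ (-z₁) * expZJ z₂ * expZJ (-z₃) * expZJ z₄).re

/-!
Conjugation by `j` fixes `j` and negates `k`, so it maps `xj + yk` to `xj - yk` and hence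
`e^{zj}` to `e^{z̄j}`. The product of the four exponentials at the conjugate point is therefore
`j P j⁻¹`, and since `Re` is a trace, `Re (i j P j⁻¹) = Re (j⁻¹ i j P) = Re (-i P)`.
-/

namespace Quaternion

variable {R : Type*} [CommRing R]

theorem re_mul_comm (a b : ℍ[R]) : (a * b).re = (b * a).re := by
  simp only [re_mul]
  ring

theorem re_mul_units_conj (u : ℍ[R]ˣ) (a b : ℍ[R]) :
    (a * (u * b * ↑u⁻¹)).re = (↑u⁻¹ * a * u * b).re :=
  calc (a * (u * b * ↑u⁻¹)).re = (a * u * b * ↑u⁻¹).re := by simp only [mul_assoc]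
    _ = (↑u⁻¹ * (a * u * b)).re := re_mul_comm _ _
    _ = (↑u⁻¹ * a * u * b).re := by simp only [mul_assoc]

end Quaternion

lemma qj_mul_qj : qj * qj = -1 := by
  ext <;> simp [re_mul, imI_mul, imJ_mul, imK_mul] <;> simp [qj]

def qjUnit : ℍ[ℝ]ˣ where
  val := qj
  inv := -qj
  val_inv := by rw [mul_neg, qj_mul_qj, neg_neg]
  inv_val := by rw [neg_mul, qj_mul_qj, neg_neg]

lemma toConjAct_qjUnit_smul (x y : ℝ) :
    ConjAct.toConjAct qjUnit • (x • qj + y • qk) = x • qj - y • qk := by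
  change qj * (x • qj + y • qk) * -qj = x • qj - y • qk
  ext <;> simp [re_mul, imI_mul, imJ_mul, imK_mul] <;> simp [qj, qk]

lemma qjUnit_inv_mul_qi_mul_qjUnit : (↑qjUnit⁻¹ : ℍ[ℝ]) * qi * qjUnit = -qi := by
  change -qj * qi * qj = -qi
  ext <;> simp [re_mul, imI_mul, imJ_mul, imK_mul] <;> simp [qi, qj]

lemma expZJ_conj (z : ℂ) : expZJ (starRingEnd ℂ z) = ConjAct.toConjAct qjUnit • expZJ z := by
  let +nondep : NormedAlgebra ℚ ℍ[ℝ] := .restrictScalars ℚ ℝ ℍ[ℝ]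
  rw [expZJ, expZJ, ← NormedSpace.exp_smul, toConjAct_qjUnit_smul, Complex.conj_re,
    Complex.conj_im, neg_smul, sub_eq_add_neg]

/-- `h(z̄₁,z̄₂,z̄₃,z̄₄) = -h(z₁,z₂,z₃,z₄)`; in particular coordinatewise complex conjugation
preserves `h⁻¹(0)`. -/
theorem hMap_conj (z₁ z₂ z₃ z₄ : ℂ) :
    hMap (starRingEnd ℂ z₁) (starRingEnd ℂ z₂) (starRingEnd ℂ z₃) (starRingEnd ℂ z₄)
      = -hMap z₁ z₂ z₃ z₄ ∧
    (hMap z₁ z₂ z₃ z₄ = 0 →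
      hMap (starRingEnd ℂ z₁) (starRingEnd ℂ z₂) (starRingEnd ℂ z₃) (starRingEnd ℂ z₄) = 0) := by
  have h_conj : hMap (starRingEnd ℂ z₁) (starRingEnd ℂ z₂) (starRingEnd ℂ z₃)
      (starRingEnd ℂ z₄) = -hMap z₁ z₂ z₃ z₄ := by
    simp only [hMap, ← map_neg, expZJ_conj, mul_assoc, ← smul_mul']
    rw [ConjAct.units_smul_def, ConjAct.ofConjAct_toConjAct, re_mul_units_conj,
      qjUnit_inv_mul_qi_mul_qjUnit, neg_mul, re_neg]
  exact ⟨h_conj, fun h => by rw [h_conj, h, neg_zero]⟩
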